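/- For 1 ≤ r ≤ 2 and positive semidefinite n×n complex matrices A, B, one has ((A + B)/2)^r ≤ (A^r + B^r)/2 in the Loewner order. -/

import Mathlib

/-!
For `1 < p < 2`, `x ^ p` is a positive multiple of
`∫₀^∞ t ^ (p - 1) * (x / t + t / (t + x) - 1) dt` (`Real.rpowIntegrand₁₂`). For each `t > 0` the
integrand is an affine function of `x` plus a positive multiple of `(t + x)⁻¹`, which is operator
convex, and operator convexity survives integration. At the endpoints,
`s a² + u b² - (s a + u b)² = s u (a - b)²` when `s + u = 1`.
Complex matrices with the `L²` operator norm form a C⋆-algebra, in which `mpow` is `CFC.rpow`.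
-/

open scoped ComplexOrder

/-- The real power of a matrix, via the continuous functional calculus. -/
noncomputable def mpow {n : ℕ} (A : Matrix (Fin n) (Fin n) ℂ) (p : ℝ) :
    Matrix (Fin n) (Fin n) ℂ :=
  cfc (fun x : ℝ => x ^ p) A

open Set Real MeasureTheory
open scoped NNReal

namespace CFC

variable {A : Type*} [CStarAlgebra A] [PartialOrder A] [StarOrderedRing A]

lemma cfc_rpowIntegrand₁₂_eqOn {p t : ℝ} (ht : 0 < t) :
    (Ici (0 : A)).EqOn (cfc (rpowIntegrand₁₂ p t)) (fun a =>
      t ^ (p - 2) • a + t ^ p • Ring.inverse (algebraMap ℝ A t + a)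
        - algebraMap ℝ A (t ^ (p - 1))) := by
  intro a ha
  have hspec : ∀ x ∈ spectrum ℝ a, t + x ≠ 0 := fun x hx => by
    have : 0 ≤ x := spectrum_nonneg_of_nonneg ha hx
    positivity
  have hinv : ContinuousOn (fun x : ℝ => (t + x)⁻¹) (spectrum ℝ a) := by
    fun_prop (disch := assumption)
  have hEq : (spectrum ℝ a).EqOn (rpowIntegrand₁₂ p t)
      (fun x => (t ^ (p - 2) * x + t ^ p * (t + x)⁻¹) - t ^ (p - 1)) := fun x _ => by
    rw [rpowIntegrand₁₂, rpow_sub ht p 2, rpow_sub_one ht.ne' p, rpow_two]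
    field_simp
  dsimp only
  rw [cfc_congr hEq, cfc_sub (fun x => t ^ (p - 2) * x + t ^ p * (t + x)⁻¹) _ a (by fun_prop),
    cfc_add a (t ^ (p - 2) * ·) (fun x => t ^ p * (t + x)⁻¹) (by fun_prop) (by fun_prop),
    cfc_const_mul_id .., cfc_const_mul _ _ a hinv, cfc_inv _ _ hspec, cfc_const_add ..,
    cfc_id' .., cfc_const ..]

lemma convexOn_cfc_rpowIntegrand₁₂ {p t : ℝ} (ht : 0 < t) :
    ConvexOn ℝ (Ici (0 : A)) (cfc (rpowIntegrand₁₂ p t)) := by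
  refine ConvexOn.congr ?_ (cfc_rpowIntegrand₁₂_eqOn ht).symm
  refine ConvexOn.sub ?_ (concaveOn_const _ (convex_Ici 0))
  exact ((LinearMap.id (R := ℝ) (M := A)).convexOn (convex_Ici 0)).smul (by positivity) |>.add
    ((CStarAlgebra.convexOn_ringInverse_algebraMap_add ht).smul (by positivity))

lemma cfcₙ_rpowIntegrand₁₂_eq_cfc {p t : ℝ} (ht : 0 < t) {a : A} (ha : 0 ≤ a) :
    cfcₙ (rpowIntegrand₁₂ p t) a = cfc (rpowIntegrand₁₂ p t) a := by
  refine cfcₙ_eq_cfc ?_ (rpowIntegrand₁₂_zero ht)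
  have hspec : ∀ x ∈ quasispectrum ℝ a, t + x ≠ 0 := fun x hx => by
    have : 0 ≤ x := quasispectrum_nonneg_of_nonneg a ha x hx
    positivity
  unfold rpowIntegrand₁₂
  fun_prop (disch := assumption)

lemma convexOn_nnrpow_of_mem_Ioo {p : ℝ≥0} (hp : p ∈ Ioo 1 2) :
    ConvexOn ℝ (Ici (0 : A)) (fun a : A => a ^ p) := by
  obtain ⟨μ, hμ⟩ := exists_measure_nnrpow_eq_integral_cfcₙ_rpowIntegrand₁₂ A hp
  refine ConvexOn.congr ?_ (fun a ha => (hμ a ha).2.symm)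
  refine integral_convexOn_of_integrand_ae (convex_Ici _) ?_ fun a ha => (hμ a ha).1
  filter_upwards [ae_restrict_mem measurableSet_Ioi] with t ht
  exact (convexOn_cfc_rpowIntegrand₁₂ ht).congr
    fun a ha => (cfcₙ_rpowIntegrand₁₂_eq_cfc ht ha).symm

lemma convexOn_sq : ConvexOn ℝ (Ici (0 : A)) (fun a : A => a ^ 2) := by
  refine ⟨convex_Ici 0, fun a ha b hb s u hs hu hsu => ?_⟩
  have hsa : IsSelfAdjoint (a - b) :=
    (IsSelfAdjoint.of_nonneg ha).sub (IsSelfAdjoint.of_nonneg hb)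
  have hgap :
      s • a ^ 2 + u • b ^ 2 - (s • a + u • b) ^ 2 = (s * u) • ((a - b) * (a - b)) := by
    obtain rfl : u = 1 - s := by linarith
    simp only [sq, sub_mul, mul_sub, add_mul, mul_add, smul_mul_assoc, mul_smul_comm]
    module
  rw [← sub_nonneg, hgap]
  exact smul_nonneg (mul_nonneg hs hu) hsa.mul_self_nonneg

lemma convexOn_rpow {p : ℝ} (hp : p ∈ Icc 1 2) :
    ConvexOn ℝ (Ici (0 : A)) (fun a : A => a ^ p) := by
  obtain rfl | hp1 := hp.1.eq_or_lt
  · exact (convexOn_id (convex_Ici 0)).congr fun a ha => (rpow_one a ha).symm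
  obtain rfl | hp2 := hp.2.eq_or_lt
  · exact convexOn_sq.congr fun a ha =>
      (by simpa using rpow_natCast a 2 ha : a ^ (2 : ℝ) = a ^ 2).symm
  lift p to ℝ≥0 using by linarith
  exact (convexOn_nnrpow_of_mem_Ioo ⟨by exact_mod_cast hp1, by exact_mod_cast hp2⟩).congr
    fun a _ => nnrpow_eq_rpow (by exact_mod_cast zero_lt_one.trans hp1)

end CFC

open scoped Matrix.Norms.L2Operator MatrixOrder

lemma mpow_eq_rpow {n : ℕ} {A : Matrix (Fin n) (Fin n) ℂ} (hA : 0 ≤ A) (p : ℝ) :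
    mpow A p = A ^ p := by
  rw [CFC.rpow_eq_cfc_real hA]
  rfl

theorem pow_r_operator_convex {n : ℕ} {A B : Matrix (Fin n) (Fin n) ℂ}
    (r : ℝ) (hr1 : 1 ≤ r) (hr2 : r ≤ 2)
    (hA : A.PosSemidef) (hB : B.PosSemidef) :
    ((2 : ℂ)⁻¹ • (mpow A r + mpow B r) - mpow ((2 : ℂ)⁻¹ • (A + B)) r).PosSemidef := by
  have hA₀ : 0 ≤ A := hA.nonneg
  have hB₀ : 0 ≤ B := hB.nonneg
  have hhalf (X : Matrix (Fin n) (Fin n) ℂ) : (2 : ℂ)⁻¹ • X = (2 : ℝ)⁻¹ • X := by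
    rw [← Complex.coe_smul]
    norm_num
  rw [← Matrix.nonneg_iff_posSemidef, sub_nonneg, hhalf, hhalf, smul_add, smul_add,
    mpow_eq_rpow hA₀, mpow_eq_rpow hB₀, mpow_eq_rpow (by positivity)]
  exact (CFC.convexOn_rpow ⟨hr1, hr2⟩).2 hA₀ hB₀ (by norm_num) (by norm_num) (by norm_num)
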